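/- Let x₀, x₁, …, xₙ (n ≥ 1) be points on the circle such that (xₙ, xₙ₋₁, …, x₁, x₀) is positively oriented, and let μ be a Radon measure on pairs of distinct circle points. Assume each consecutive pair (xᵢ, xᵢ₊₁) is μ-somewhat short and assume μ({xᵢ} × [xᵢ₋₁, xᵢ₊₁]) = 0 for each interior index 0 < i < n (with arcs labeled by the orientation). Then (x₀, xₙ) is μ-somewhat short. -/

import Mathlib

open MeasureTheory Set ENNReal

/-- The open arc `]a,b[` on a circularly ordered set. -/
def oarc {S : Type*} [CircularOrder S] (a b : S) : Set S := {x | sbtw a x b}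

/-- The closed arc `[a,b]`. -/
def carc {S : Type*} [CircularOrder S] (a b : S) : Set S :=
  insert a (insert b (oarc a b))

/-- `(a,b)` is `μ`-somewhat short. -/
def SomewhatShort {S : Type*} [CircularOrder S] [MeasurableSpace S]
    (μ : Measure (S × S)) (a b : S) : Prop :=
  μ ((oarc a b) ×ˢ (oarc b a)) = 0

/-! Induct along the chain, showing that `(xₘ, x₀)` is somewhat short for every `m ≤ n`.
For the step, a point `y` of `]xₘ₊₁, x₀[` lies in `]xₘ₊₁, xₘ[`, equals `xₘ`, or lies in `]xₘ, x₀[`.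
Accordingly `]xₘ₊₁, x₀[ × ]x₀, xₘ₊₁[` is covered by the rectangle of the short pair `(xₘ₊₁, xₘ)`,
the null vertex slice at `xₘ`, and the rectangle of `(xₘ, x₀)`, null by induction.
Flip invariance of `μ` makes somewhat shortness symmetric, so the orientation of pairs is free. -/

section CircularOrder
variable {S : Type*} [CircularOrder S] {a b c y : S}

theorem sbtw_of_btw_of_ne (h : btw a b c) (hab : a ≠ b) (hbc : b ≠ c) (hca : c ≠ a) :
    sbtw a b c :=
  sbtw_of_btw_not_btw h fun h' => by rcases h.antisymm h' with h | h | h <;> contradiction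

theorem SBtw.sbtw.left_ne_mid (h : sbtw a b c) : a ≠ b := by
  rintro rfl; exact sbtw_irrefl_left h

theorem SBtw.sbtw.mid_ne_right (h : sbtw a b c) : b ≠ c := by
  rintro rfl; exact sbtw_irrefl_right h

theorem sbtw_or_eq_or_sbtw (hy : sbtw c y a) (hb : sbtw c b a) :
    sbtw c y b ∨ y = b ∨ sbtw b y a := by
  rw [sbtw_iff_not_btw, sbtw_iff_not_btw]
  by_contra! h
  obtain ⟨hbyc, hyb, hayb⟩ := h
  have hycb : sbtw y c b := (sbtw_of_btw_of_ne hbyc (Ne.symm hyb) (hy.left_ne_mid).symm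
    (hb.left_ne_mid)).cyclic_left
  have hyba : sbtw y b a := (sbtw_of_btw_of_ne hayb (hy.mid_ne_right).symm hyb
    (hb.mid_ne_right)).cyclic_left
  exact sbtw_asymm (sbtw_trans_right hycb hyba) hy.cyclic_left.cyclic_left

theorem oarc_self (a : S) : oarc a a = ∅ :=
  eq_empty_of_forall_notMem fun _ => sbtw_irrefl_left_right

theorem oarc_subset_carc (h : b = a ∨ sbtw c b a) : oarc a c ⊆ carc b c := by
  rcases h with rfl | h
  · exact (subset_insert _ _).trans (subset_insert _ _)
  · exact fun z hz => mem_insert_of_mem _ (mem_insert_of_mem _ (h.cyclic_left.trans_left hz))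

theorem oarc_prod_oarc_subset_of_sbtw (hb : sbtw c b a) :
    oarc c a ×ˢ oarc a c ⊆ oarc c b ×ˢ oarc b c ∪ {b} ×ˢ oarc a c ∪ oarc b a ×ˢ oarc a b := by
  rintro ⟨y, z⟩ ⟨hy, hz⟩
  rcases sbtw_or_eq_or_sbtw hy hb with h | rfl | h
  · exact Or.inl (Or.inl ⟨h, hb.cyclic_left.trans_left hz⟩)
  · exact Or.inl (Or.inr ⟨rfl, hz⟩)
  · exact Or.inr ⟨h, (hz.cyclic_left.trans_left hb).cyclic_right⟩

end CircularOrder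

section SomewhatShort
variable {S : Type*} [CircularOrder S] [MeasurableSpace S] {μ : Measure (S × S)} {a b c : S}

theorem SomewhatShort.symm (hflip : ∀ A B : Set S, μ (A ×ˢ B) = μ (B ×ˢ A))
    (h : SomewhatShort μ a b) : SomewhatShort μ b a :=
  (hflip _ _).trans h

theorem SomewhatShort.trans_of_sbtw (hcb : SomewhatShort μ c b) (hb : sbtw c b a)
    (hvert : μ ({b} ×ˢ oarc a c) = 0) (hba : SomewhatShort μ b a) : SomewhatShort μ c a :=
  measure_mono_null (oarc_prod_oarc_subset_of_sbtw hb)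
    (measure_union_null (measure_union_null hcb hvert) hba)

end SomewhatShort

theorem endpoints_somewhat_short_general
    {S : Type*} [CircularOrder S] [MeasurableSpace S]
    (μ : Measure (S × S))
    (hflip : ∀ A B : Set S, μ (A ×ˢ B) = μ (B ×ˢ A))
    (n : ℕ) (x : ℕ → S)
    (hpos : ∀ i j k : ℕ, i < j → j < k → k ≤ n → sbtw (x k) (x j) (x i))
    (hss : ∀ i < n, SomewhatShort μ (x i) (x (i + 1)))
    (hvert : ∀ i, 0 < i → i < n →
      μ ({x i} ×ˢ carc (x (i - 1)) (x (i + 1))) = 0) :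
    SomewhatShort μ (x 0) (x n) := by
  suffices h : ∀ m ≤ n, SomewhatShort μ (x m) (x 0) from (h n le_rfl).symm hflip
  intro m hm
  induction m with
  | zero => simp [SomewhatShort, oarc_self]
  | succ m ih =>
    rcases Nat.eq_zero_or_pos m with rfl | hm0
    · exact (hss 0 hm).symm hflip
    have hprev : x (m - 1) = x 0 ∨ sbtw (x (m + 1)) (x (m - 1)) (x 0) := by
      rcases Nat.eq_zero_or_pos (m - 1) with h | h
      · exact Or.inl (by rw [h])
      · exact Or.inr (hpos 0 (m - 1) (m + 1) h (by omega) hm)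
    have hslice : μ ({x m} ×ˢ oarc (x 0) (x (m + 1))) = 0 :=
      measure_mono_null (prod_mono_right (oarc_subset_carc hprev)) (hvert m hm0 hm)
    exact ((hss m hm).symm hflip).trans_of_sbtw (hpos 0 m (m + 1) hm0 m.lt_succ_self hm)
      hslice (ih (m.le_succ.trans hm))

/-- if `(xₙ, …, x₀)` is positively oriented, each consecutive pair
`(xᵢ, xᵢ₊₁)` is `μ`-somewhat short, and each vertex slice `{xᵢ} × [xᵢ₋₁, xᵢ₊₁]` is
`μ`-null, then `(x₀, xₙ)` is `μ`-somewhat short. -/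
theorem endpoints_somewhat_short
    {S : Type*} [CircularOrder S] [MeasurableSpace S]
    (μ : Measure (S × S))
    (hflip : ∀ A B : Set S, μ (A ×ˢ B) = μ (B ×ˢ A))
    (n : ℕ) (hn : 1 ≤ n) (x : ℕ → S)
    (hpos : ∀ i j k : ℕ, i < j → j < k → k ≤ n → sbtw (x k) (x j) (x i))
    (hss : ∀ i < n, SomewhatShort μ (x i) (x (i + 1)))
    (hvert : ∀ i, 0 < i → i < n →
      μ ({x i} ×ˢ carc (x (i - 1)) (x (i + 1))) = 0) :
    SomewhatShort μ (x 0) (x n) :=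
  endpoints_somewhat_short_general μ hflip n x hpos hss hvert
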